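/- Let (M,G) be a strongly convex weakly Kähler Finsler manifold with distance function r from p, T = ∇r, V = J∇r. Along a radial unit-speed geodesic (where r is smooth), H(r)(V,V) = -4·r₁₁, where r₁₁ = T_o^α T_o^β ∂²r/∂z^α∂z^β - 2𝔾^α(T_o) ∂r/∂z^α is the complex Hessian of r in the direction T_o = ½(T - iJT). -/

import Mathlib

/-- The standard complex structure `J` on `ℝ^{2n}`: `(Jy)^α = -y^{α+n}`, `(Jy)^{α+n} = y^α`. -/
def Jstd (n : ℕ) (y : Fin (2 * n) → ℝ) : Fin (2 * n) → ℝ := fun i =>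
  if h : (i : ℕ) < n then -y ⟨(i : ℕ) + n, by have := i.isLt; omega⟩
  else y ⟨(i : ℕ) - n, by have := i.isLt; omega⟩

/-- The matrix entries `J^i_k` of the standard complex structure on `ℝ^{2n}`. -/
def Jmat (n : ℕ) (i k : Fin (2 * n)) : ℝ :=
  if (k : ℕ) < n then (if (i : ℕ) = (k : ℕ) + n then 1 else 0)
  else (if (i : ℕ) + n = (k : ℕ) then -1 else 0)

/-- Partial derivative `∂f/∂y^k` at `y`. -/
noncomputable def pd {m : ℕ} (f : (Fin m → ℝ) → ℝ) (y : Fin m → ℝ) (k : Fin m) : ℝ :=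
  fderiv ℝ f y (Pi.single k 1)

/-- Second partial derivative `∂²f/∂y^i∂y^j` at `y`. -/
noncomputable def pd2 {m : ℕ} (f : (Fin m → ℝ) → ℝ) (y : Fin m → ℝ) (i j : Fin m) : ℝ :=
  pd (fun z => pd f z j) y i

/-- The inclusion `α ↦ α` of `Fin n` into `Fin (2n)`. -/
def lo (n : ℕ) (α : Fin n) : Fin (2 * n) := ⟨(α : ℕ), by have := α.isLt; omega⟩

/-- The inclusion `α ↦ α + n` of `Fin n` into `Fin (2n)`. -/
def hi (n : ℕ) (α : Fin n) : Fin (2 * n) := ⟨(α : ℕ) + n, by have := α.isLt; omega⟩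

/-- Complex scalar multiplication `ζ·y` on `ℝ^{2n} ≅ ℂⁿ`: `ζ·y = (Re ζ)y + (Im ζ)Jy`. -/
def cmul (n : ℕ) (ζ : ℂ) (y : Fin (2 * n) → ℝ) : Fin (2 * n) → ℝ :=
  ζ.re • y + ζ.im • Jstd n y

/-- The Finsler Hessian of a function `r` of the base coordinates `x`, with respect to
the Berwald connection of the spray `Ĝ^i`, evaluated with reference vector `T(x)`:
`H(r)(X,Y) = X^iY^j(∂²r/∂x^i∂x^j - Ĝ^k_{ij}(T(x))·∂r/∂x^k)`. -/
noncomputable def finslerHess (n : ℕ) (Gh : Fin (2 * n) → (Fin (2 * n) → ℝ) → ℝ)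
    (r : (Fin (2 * n) → ℝ) → ℝ) (T : (Fin (2 * n) → ℝ) → Fin (2 * n) → ℝ)
    (x : Fin (2 * n) → ℝ) (X Y : Fin (2 * n) → ℝ) : ℝ :=
  ∑ i, ∑ j, X i * Y j * (pd2 r x i j - ∑ k, pd2 (Gh k) (T x) i j * pd r x k)

/-- The complex Hessian `r₁₁ = T_o^α T_o^β ∂²r/∂z^α∂z^β - 2𝔾^α(T_o)∂r/∂z^α` of `r` in
the direction `T_o = ½(T - iJT)`, written in the underlying real coordinates, where
`T_o^α = T^α + iT^{α+n}`, `∂/∂z^α = ½(∂/∂x^α - i∂/∂x^{α+n})` and, by weak Kählerness,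
`𝔾^α(T_o) = Ĝ^α(T) + i·Ĝ^{α+n}(T)`. -/
noncomputable def complexHess11 (n : ℕ) (Gh : Fin (2 * n) → (Fin (2 * n) → ℝ) → ℝ)
    (r : (Fin (2 * n) → ℝ) → ℝ) (T : (Fin (2 * n) → ℝ) → Fin (2 * n) → ℝ)
    (x : Fin (2 * n) → ℝ) : ℂ :=
  (∑ α : Fin n, ∑ β : Fin n,
      ((T x (lo n α) : ℂ) + (T x (hi n α) : ℂ) * Complex.I) *
        ((T x (lo n β) : ℂ) + (T x (hi n β) : ℂ) * Complex.I) *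
        ((1 / 4 : ℂ) *
          (((pd2 r x (lo n α) (lo n β) : ℝ) - pd2 r x (hi n α) (hi n β) : ℝ) -
            Complex.I *
              ((pd2 r x (hi n α) (lo n β) : ℝ) + pd2 r x (lo n α) (hi n β) : ℝ)))) -
    2 * ∑ α : Fin n,
      ((Gh (lo n α) (T x) : ℂ) + (Gh (hi n α) (T x) : ℂ) * Complex.I) *
        ((1 / 2 : ℂ) * ((pd r x (lo n α) : ℂ) - Complex.I * (pd r x (hi n α) : ℂ)))



lemma fderiv_apply_eq_sum {m : ℕ} (f : (Fin m → ℝ) → ℝ) (u : Fin m → ℝ) (w : Fin m → ℝ) :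
    fderiv ℝ f u w = ∑ i, w i * pd f u i := by
  conv_lhs => rw [pi_eq_sum_univ w]
  rw [map_sum]
  refine Finset.sum_congr rfl fun i _ => ?_
  rw [map_smul, smul_eq_mul, pd]
  congr 2
  ext j
  rw [Pi.single_apply]
  simp [eq_comm]

lemma hasDerivAt_line {m : ℕ} {f : (Fin m → ℝ) → ℝ} {u : Fin m → ℝ}
    (hf : DifferentiableAt ℝ f u) (w : Fin m → ℝ) :
    HasDerivAt (fun t : ℝ => f (u + t • w)) (∑ i, w i * pd f u i) 0 := by
  have hline : HasDerivAt (fun t : ℝ => u + t • w) w 0 := by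
    simpa using ((hasDerivAt_id (0:ℝ)).smul_const w).const_add u
  have h0 : HasFDerivAt f (fderiv ℝ f u) (u + (0:ℝ) • w) := by
    simpa using hf.hasFDerivAt
  have h2 := h0.comp_hasDerivAt (0:ℝ) hline
  rw [fderiv_apply_eq_sum] at h2
  exact h2

lemma differentiableAt_pd {m : ℕ} {f : (Fin m → ℝ) → ℝ} {u : Fin m → ℝ}
    (hf : ContDiffAt ℝ (⊤ : ℕ∞) f u) (j : Fin m) :
    DifferentiableAt ℝ (fun y => pd f y j) u := by
  have h1 : ContDiffAt ℝ (⊤ : ℕ∞) (fderiv ℝ f) u := hf.fderiv_right (by simp)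
  exact ((ContinuousLinearMap.apply ℝ ℝ (Pi.single j (1:ℝ))).differentiable.differentiableAt).comp u
    (h1.differentiableAt (by simp))

lemma derivLine_unique {m : ℕ} (F G : (Fin m → ℝ) → ℝ) {u : Fin m → ℝ} (w : Fin m → ℝ) (hu : u ≠ 0)
    (hFG : ∀ y : Fin m → ℝ, y ≠ 0 → F y = G y) {a b : ℝ}
    (hF : HasDerivAt (fun t : ℝ => F (u + t • w)) a 0)
    (hG : HasDerivAt (fun t : ℝ => G (u + t • w)) b 0) : a = b := by
  have hcont : Continuous fun t : ℝ => u + t • w := by continuity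
  have hne : ∀ᶠ t : ℝ in nhds 0, u + t • w ≠ 0 := by
    have h1 : {(0 : Fin m → ℝ)}ᶜ ∈ nhds (u + (0:ℝ) • w) := by
      refine isOpen_compl_singleton.mem_nhds ?_
      simpa using hu
    have := hcont.continuousAt (x := (0:ℝ)).preimage_mem_nhds h1
    filter_upwards [this] with t ht
    simpa using ht
  have hev : (fun t : ℝ => F (u + t • w)) =ᶠ[nhds 0] fun t => G (u + t • w) :=
    hne.mono fun t ht => hFG _ ht
  exact (hF.congr_of_eventuallyEq hev.symm).unique hG

lemma euler_deg2 {m : ℕ} {f : (Fin m → ℝ) → ℝ} {y : Fin m → ℝ}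
    (hf : DifferentiableAt ℝ f y)
    (hhom : ∀ c : ℝ, 0 < c → ∀ z, f (c • z) = c ^ 2 * f z) :
    ∑ i, y i * pd f y i = 2 * f y := by
  have hline : HasDerivAt (fun c : ℝ => c • y) y 1 := by
    simpa using (hasDerivAt_id (1:ℝ)).smul_const y
  have h0 : HasFDerivAt f (fderiv ℝ f y) ((1:ℝ) • y) := by simpa using hf.hasFDerivAt
  have h1 := h0.comp_hasDerivAt (1:ℝ) hline
  rw [fderiv_apply_eq_sum] at h1
  have h2 : HasDerivAt (fun c : ℝ => c ^ 2 * f y) (2 * f y) 1 := by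
    simpa using (hasDerivAt_pow 2 (1:ℝ)).mul_const (f y)
  have hev : (fun c : ℝ => f (c • y)) =ᶠ[nhds 1] fun c => c ^ 2 * f y := by
    filter_upwards [isOpen_Ioi.mem_nhds (show (0:ℝ) < 1 by norm_num)] with c hc
    exact hhom c hc y
  have h3 : HasDerivAt (fun c : ℝ => f (c • y)) (2 * f y) 1 :=
    h2.congr_of_eventuallyEq hev
  exact h1.unique h3





lemma Jstd_add (n : ℕ) (y z : Fin (2*n) → ℝ) : Jstd n (y + z) = Jstd n y + Jstd n z := by
  funext i; simp only [Jstd, Pi.add_apply]; split <;> ring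

lemma Jstd_smul (n : ℕ) (c : ℝ) (y : Fin (2*n) → ℝ) : Jstd n (c • y) = c • Jstd n y := by
  funext i; simp only [Jstd, Pi.smul_apply, smul_eq_mul]; split <;> ring

lemma Jstd_lo (n : ℕ) (y : Fin (2*n) → ℝ) (α : Fin n) : Jstd n y (lo n α) = -y (hi n α) := by
  have h : ((lo n α : Fin (2*n)) : ℕ) < n := α.isLt
  simp only [Jstd, dif_pos h]
  congr 1

lemma Jstd_hi (n : ℕ) (y : Fin (2*n) → ℝ) (α : Fin n) : Jstd n y (hi n α) = y (lo n α) := by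
  have h : ¬ ((hi n α : Fin (2*n)) : ℕ) < n := by simp [hi]
  simp only [Jstd, dif_neg h]
  congr 1
  simp [hi, lo]

lemma Jstd_Jstd (n : ℕ) (y : Fin (2*n) → ℝ) : Jstd n (Jstd n y) = -y := by
  funext i
  rcases lt_or_ge (i : ℕ) n with h | h
  · simp only [Jstd, dif_pos h, Pi.neg_apply]
    rw [dif_neg (by simp only [Fin.val_mk]; omega : ¬ ((⟨(i:ℕ) + n, by omega⟩ : Fin (2*n)) : ℕ) < n)]
    congr 1
    exact congrArg y (Fin.ext (by simp only [Fin.val_mk]; omega))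
  · simp only [Jstd, dif_neg (by omega : ¬ (i:ℕ) < n), Pi.neg_apply]
    rw [dif_pos (by simp only [Fin.val_mk]; omega : ((⟨(i:ℕ) - n, by omega⟩ : Fin (2*n)) : ℕ) < n)]
    exact congrArg (fun t => -y t) (Fin.ext (by simp only [Fin.val_mk]; omega))

lemma sum_Jmat_mul (n : ℕ) (z : Fin (2*n) → ℝ) (i : Fin (2*n)) :
    ∑ k, Jmat n i k * z k = Jstd n z i := by
  rcases lt_or_ge (i : ℕ) n with h | h
  · rw [Finset.sum_eq_single (⟨(i:ℕ) + n, by omega⟩ : Fin (2*n))]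
    · simp only [Jmat, Jstd, dif_pos h]
      rw [if_neg (show ¬ ((i:ℕ) + n < n) by omega)]
      norm_num
    · intro k _ hk
      simp only [Jmat]
      split_ifs with h1 h2 h3
      · omega
      · ring
      · exact absurd (Fin.ext (by simp only [Fin.val_mk]; omega)) hk
      · ring
    · intro hmem; exact absurd (Finset.mem_univ _) hmem
  · rw [Finset.sum_eq_single (⟨(i:ℕ) - n, by omega⟩ : Fin (2*n))]
    · simp only [Jmat, Jstd, dif_neg (by omega : ¬ (i:ℕ) < n)]
      rw [if_pos (show (i:ℕ) - n < n by omega), if_pos (show (i:ℕ) = (i:ℕ) - n + n by omega)]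
      norm_num
    · intro k _ hk
      simp only [Jmat]
      split_ifs with h1 h2 h3
      · exact absurd (Fin.ext (by simp only [Fin.val_mk]; omega)) hk
      · ring
      · exact absurd (Fin.ext (by simp only [Fin.val_mk]; omega)) hk
      · ring
    · intro hmem; exact absurd (Finset.mem_univ _) hmem

def loHiEquiv (n : ℕ) : Fin n ⊕ Fin n ≃ Fin (2 * n) where
  toFun := Sum.elim (lo n) (hi n)
  invFun i := if h : (i:ℕ) < n then Sum.inl ⟨i, h⟩
    else Sum.inr ⟨(i:ℕ) - n, by have := i.isLt; omega⟩
  left_inv s := by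
    rcases s with a | a
    · simp [lo, hi, a.isLt]
    · have : ¬ ((a:ℕ) + n < n) := by omega
      simp only [Sum.elim_inr, hi, this, dif_neg, not_false_iff]
      congr 1
      exact (dif_neg this).trans (congrArg Sum.inr (Fin.ext (Nat.add_sub_cancel _ _)))
  right_inv i := by
    by_cases h : (i:ℕ) < n
    · simp [h, lo]
    · simp only [h, dif_neg, not_false_iff, Sum.elim_inr, hi]
      exact Fin.ext (by simp only [Fin.val_mk]; omega)

lemma sum_split {n : ℕ} (f : Fin (2*n) → ℝ) :
    ∑ i, f i = ∑ α : Fin n, f (lo n α) + ∑ α : Fin n, f (hi n α) := by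
  rw [← Equiv.sum_comp (loHiEquiv n) f, Fintype.sum_sum_type]
  rfl

lemma split2 {n : ℕ} (F : Fin (2*n) → Fin (2*n) → ℝ) : (∑ i, ∑ j, F i j) =
    (∑ α : Fin n, ∑ β : Fin n, F (lo n α) (lo n β)) +
    (∑ α : Fin n, ∑ β : Fin n, F (lo n α) (hi n β)) +
    ((∑ α : Fin n, ∑ β : Fin n, F (hi n α) (lo n β)) +
    (∑ α : Fin n, ∑ β : Fin n, F (hi n α) (hi n β))) := by
  rw [sum_split (fun i => ∑ j, F i j)]
  congr 1
  · rw [← Finset.sum_add_distrib]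
    exact Finset.sum_congr rfl fun α _ => sum_split _
  · rw [← Finset.sum_add_distrib]
    exact Finset.sum_congr rfl fun α _ => sum_split _



lemma pd2_symm {m : ℕ} {f : (Fin m → ℝ) → ℝ} (hf : ContDiff ℝ (⊤ : ℕ∞) f) (x : Fin m → ℝ)
    (i j : Fin m) : pd2 f x i j = pd2 f x j i := by
  have hsym : IsSymmSndFDerivAt ℝ f x := (hf.contDiffAt).isSymmSndFDerivAt (by rw [minSmoothness_of_isRCLikeNormedField]; exact WithTop.coe_le_coe.mpr (le_top : (2 : ℕ∞) ≤ ⊤))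
  have hdf : DifferentiableAt ℝ (fderiv ℝ f) x :=
    ((hf.fderiv_right (m := (⊤ : ℕ∞)) (by simp)).differentiable (by simp)) x
  have key : ∀ v w : Fin m → ℝ,
      fderiv ℝ (fun z => fderiv ℝ f z w) x v = fderiv ℝ (fderiv ℝ f) x v w := by
    intro v w
    have h1 := ((ContinuousLinearMap.apply ℝ ℝ w).hasFDerivAt.comp x hdf.hasFDerivAt).fderiv
    have h2 : (fun z => fderiv ℝ f z w) =
        (ContinuousLinearMap.apply ℝ ℝ w) ∘ (fderiv ℝ f) := rfl
    rw [h2, h1]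
    rfl
  show pd (fun z => pd f z j) x i = pd (fun z => pd f z i) x j
  unfold pd
  rw [key, key, hsym]

lemma contract3 {m : ℕ} (X Y R : Fin m → ℝ) (P : Fin m → Fin m → Fin m → ℝ) :
    ∑ i, ∑ j, X i * Y j * (∑ k, P k i j * R k)
      = ∑ k, R k * (∑ j, (∑ i, X i * P k i j) * Y j) := by
  simp only [Finset.mul_sum, Finset.sum_mul]
  rw [Finset.sum_congr rfl fun i (_ : i ∈ Finset.univ) => Finset.sum_comm]
  rw [Finset.sum_comm]
  refine Finset.sum_congr rfl fun k _ => ?_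
  rw [Finset.sum_comm]
  refine Finset.sum_congr rfl fun i _ => Finset.sum_congr rfl fun j _ => by ring

lemma dsub {n : ℕ} (F G : Fin n → Fin n → ℝ) :
    (∑ α, ∑ β, F α β) - (∑ α, ∑ β, G α β) = ∑ α, ∑ β, (F α β - G α β) := by
  rw [← Finset.sum_sub_distrib]
  exact Finset.sum_congr rfl fun α _ => by rw [Finset.sum_sub_distrib]

lemma dadd {n : ℕ} (F G : Fin n → Fin n → ℝ) :
    (∑ α, ∑ β, F α β) + (∑ α, ∑ β, G α β) = ∑ α, ∑ β, (F α β + G α β) := by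
  rw [← Finset.sum_add_distrib]
  exact Finset.sum_congr rfl fun α _ => Finset.sum_add_distrib.symm

lemma dneg {n : ℕ} (F : Fin n → Fin n → ℝ) :
    -(∑ α, ∑ β, F α β) = ∑ α, ∑ β, (-(F α β)) := by
  rw [← Finset.sum_neg_distrib]
  exact Finset.sum_congr rfl fun α _ => by rw [Finset.sum_neg_distrib]

lemma dscale {n : ℕ} (c : ℝ) (F : Fin n → Fin n → ℝ) :
    c * (∑ α, ∑ β, F α β) = ∑ α, ∑ β, c * F α β := by
  rw [Finset.mul_sum]
  exact Finset.sum_congr rfl fun α _ => Finset.mul_sum _ _ _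

lemma add4 {n : ℕ} (F1 F2 F3 F4 : Fin n → Fin n → ℝ) :
    (∑ α, ∑ β, F1 α β) + (∑ α, ∑ β, F2 α β) + ((∑ α, ∑ β, F3 α β) + (∑ α, ∑ β, F4 α β))
      = ∑ α, ∑ β, (F1 α β + F2 α β + (F3 α β + F4 α β)) := by
  rw [dadd F1 F2, dadd F3 F4, dadd]

lemma csum_split {n : ℕ} (p q : Fin n → ℝ) :
    (∑ α, (((p α : ℝ) : ℂ) + ((q α : ℝ) : ℂ) * Complex.I))
      = ((∑ α, p α : ℝ) : ℂ) + ((∑ α, q α : ℝ) : ℂ) * Complex.I := by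
  rw [Finset.sum_add_distrib, ← Finset.sum_mul]
  push_cast
  ring

/-- **Lemma 7.2.** Let `(M,G)` be strongly convex weakly Kähler with real spray
coefficients `Ĝ^i` (2-homogeneous, smooth away from `0`, satisfying the weak-Kähler
parallelism `Ĝ^i_k u^k = 2J^i_kĜ^k`), and let `r` be the distance function with
gradient field `T = ∇r`, `V = JT`. At a point `x` where `H(r)(T,T) = H(r)(T,V) = 0`
(as holds along radial geodesics), one has `H(r)(V,V) = -4·r₁₁`. -/
theorem hessVV_eq_neg_four_r11 (n : ℕ)
    (Gh : Fin (2 * n) → (Fin (2 * n) → ℝ) → ℝ)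
    (r : (Fin (2 * n) → ℝ) → ℝ) (T : (Fin (2 * n) → ℝ) → Fin (2 * n) → ℝ)
    (hsm : ∀ i, ContDiffOn ℝ (⊤ : ℕ∞) (Gh i) ({(0 : Fin (2 * n) → ℝ)}ᶜ))
    (hrsm : ContDiff ℝ (⊤ : ℕ∞) r)
    (hhom : ∀ i, ∀ c : ℝ, 0 < c → ∀ y : Fin (2 * n) → ℝ, Gh i (c • y) = c ^ 2 * Gh i y)
    (hpar : ∀ y : Fin (2 * n) → ℝ, y ≠ 0 → ∀ i : Fin (2 * n),
      (∑ k, pd (Gh i) y k * Jstd n y k) = 2 * ∑ k, Jmat n i k * Gh k y)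
    (x : Fin (2 * n) → ℝ) (hT : T x ≠ 0)
    (hTT : finslerHess n Gh r T x (T x) (T x) = 0)
    (hTV : finslerHess n Gh r T x (T x) (Jstd n (T x)) = 0) :
    ((finslerHess n Gh r T x (Jstd n (T x)) (Jstd n (T x)) : ℝ) : ℂ) =
      -4 * complexHess11 n Gh r T x := by
  classical
  set u : Fin (2*n) → ℝ := T x with hudef
  have hmemy : ∀ y : Fin (2*n) → ℝ, y ≠ 0 → ({(0 : Fin (2*n) → ℝ)}ᶜ : Set _) ∈ nhds y :=
    fun y hy => isOpen_compl_singleton.mem_nhds (by simpa using hy)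
  have hGc : ∀ k, ContDiffAt ℝ (⊤ : ℕ∞) (Gh k) u := fun k => (hsm k).contDiffAt (hmemy u hT)
  have hGd : ∀ (y : Fin (2*n) → ℝ), y ≠ 0 → ∀ k, DifferentiableAt ℝ (Gh k) y := fun y hy k =>
    ((hsm k).contDiffAt (hmemy y hy)).differentiableAt (by simp)
  have euler : ∀ (y : Fin (2*n) → ℝ), y ≠ 0 → ∀ k, ∑ i, y i * pd (Gh k) y i = 2 * Gh k y :=
    fun y hy k => euler_deg2 (hGd y hy k) (fun c hc z => hhom k c hc z)
  have affine : ∀ (w : Fin (2*n) → ℝ) (i : Fin (2*n)),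
      HasDerivAt (fun t : ℝ => (u + t • w) i) (w i) 0 := by
    intro w i
    simpa using ((hasDerivAt_id (0:ℝ)).mul_const (w i)).const_add (u i)
  have pdline : ∀ (w : Fin (2*n) → ℝ) (k j : Fin (2*n)),
      HasDerivAt (fun t : ℝ => pd (Gh k) (u + t • w) j) (∑ i, w i * pd2 (Gh k) u i j) 0 :=
    fun w k j => hasDerivAt_line (differentiableAt_pd (hGc k) j) w
  have Gline : ∀ (w : Fin (2*n) → ℝ) (k : Fin (2*n)),
      HasDerivAt (fun t : ℝ => Gh k (u + t • w)) (∑ i, w i * pd (Gh k) u i) 0 :=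
    fun w k => hasDerivAt_line (hGd u hT k) w
  have Jline : ∀ (w : Fin (2*n) → ℝ) (j : Fin (2*n)),
      HasDerivAt (fun t : ℝ => Jstd n (u + t • w) j) (Jstd n w j) 0 := by
    intro w j
    have he : (fun t : ℝ => Jstd n (u + t • w) j) = fun t : ℝ => Jstd n u j + t * Jstd n w j := by
      funext t
      rw [Jstd_add, Jstd_smul]
      simp
    rw [he]
    simpa using ((hasDerivAt_id (0:ℝ)).mul_const (Jstd n w j)).const_add (Jstd n u j)
  have deuler : ∀ (w : Fin (2*n) → ℝ) (k : Fin (2*n)),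
      ∑ i, (w i * pd (Gh k) u i + u i * (∑ j, w j * pd2 (Gh k) u j i))
        = 2 * ∑ i, w i * pd (Gh k) u i := by
    intro w k
    refine derivLine_unique (fun y => ∑ i, y i * pd (Gh k) y i) (fun y => 2 * Gh k y) w hT
      (fun y hy => euler y hy k) ?_ ?_
    · refine HasDerivAt.fun_sum fun i _ => ?_
      simpa using (affine w i).fun_mul (pdline w k i)
    · exact (Gline w k).const_mul 2
  have QUU : ∀ k, ∑ j, (∑ i, u i * pd2 (Gh k) u i j) * u j = 2 * Gh k u := by
    intro k
    have h := deuler u k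
    rw [Finset.sum_add_distrib] at h
    have h2 : ∑ i, u i * (∑ j, u j * pd2 (Gh k) u j i)
        = ∑ j, (∑ i, u i * pd2 (Gh k) u i j) * u j :=
      Finset.sum_congr rfl fun o _ => mul_comm _ _
    rw [h2, euler u hT k] at h
    linarith
  have dpar2 : ∀ (w : Fin (2*n) → ℝ) (k : Fin (2*n)),
      ∑ j, ((∑ i, w i * pd2 (Gh k) u i j) * Jstd n u j + pd (Gh k) u j * Jstd n w j)
        = 2 * ∑ k', Jmat n k k' * (∑ i, w i * pd (Gh k') u i) := by
    intro w k
    refine derivLine_unique (fun y => ∑ j, pd (Gh k) y j * Jstd n y j)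
      (fun y => 2 * ∑ k', Jmat n k k' * Gh k' y) w hT (fun y hy => hpar y hy k) ?_ ?_
    · refine HasDerivAt.fun_sum fun j _ => ?_
      simpa using (pdline w k j).fun_mul (Jline w j)
    · exact (HasDerivAt.fun_sum fun k' _ => (Gline w k').const_mul (Jmat n k k')).const_mul 2
  have gvec : ∀ k', (∑ i, Jmat n k' i * Gh i u) = Jstd n (fun i => Gh i u) k' :=
    fun k' => sum_Jmat_mul n (fun i => Gh i u) k'
  have QUV : ∀ k, ∑ j, (∑ i, u i * pd2 (Gh k) u i j) * Jstd n u j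
      = 2 * ∑ k', Jmat n k k' * Gh k' u := by
    intro k
    have h := dpar2 u k
    rw [Finset.sum_add_distrib] at h
    have h4 : ∑ k', Jmat n k k' * (∑ i, u i * pd (Gh k') u i)
        = 2 * ∑ k', Jmat n k k' * Gh k' u := by
      rw [Finset.mul_sum]
      exact Finset.sum_congr rfl fun k' _ => by rw [euler u hT k']; ring
    rw [hpar u hT k, h4] at h
    linarith
  have QVV : ∀ k, ∑ j, (∑ i, Jstd n u i * pd2 (Gh k) u i j) * Jstd n u j
      = -(2 * Gh k u) := by
    intro k
    have h := dpar2 (Jstd n u) k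
    rw [Finset.sum_add_distrib] at h
    have h2 : ∑ j, pd (Gh k) u j * Jstd n (Jstd n u) j = -(2 * Gh k u) := by
      rw [Jstd_Jstd]
      have e : ∑ j, pd (Gh k) u j * (-u) j = -∑ j, u j * pd (Gh k) u j := by
        rw [← Finset.sum_neg_distrib]
        exact Finset.sum_congr rfl fun j _ => by simp [Pi.neg_apply]; ring
      rw [e, euler u hT k]
    have h3 : ∀ k', ∑ i, Jstd n u i * pd (Gh k') u i = 2 * Jstd n (fun i => Gh i u) k' := by
      intro k'
      have hp := hpar u hT k'
      rw [gvec k'] at hp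
      rw [← hp]
      exact Finset.sum_congr rfl fun i _ => mul_comm _ _
    have h4 : ∑ k', Jmat n k k' * (∑ i, Jstd n u i * pd (Gh k') u i) = -(2 * Gh k u) := by
      have e1 : ∑ k', Jmat n k k' * (∑ i, Jstd n u i * pd (Gh k') u i)
          = 2 * ∑ k', Jmat n k k' * Jstd n (fun i => Gh i u) k' := by
        rw [Finset.mul_sum]
        exact Finset.sum_congr rfl fun k' _ => by rw [h3 k']; ring
      have e2 : ∑ k', Jmat n k k' * Jstd n (fun i => Gh i u) k'
          = Jstd n (Jstd n (fun i => Gh i u)) k := sum_Jmat_mul n _ k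
      rw [e1, e2, Jstd_Jstd]
      simp only [Pi.neg_apply]
      ring
    rw [h2, h4] at h
    linarith
  have hHess : ∀ X Y : Fin (2*n) → ℝ, finslerHess n Gh r T x X Y
      = (∑ i, ∑ j, X i * Y j * pd2 r x i j)
        - ∑ k, pd r x k * (∑ j, (∑ i, X i * pd2 (Gh k) u i j) * Y j) := by
    intro X Y
    unfold finslerHess
    rw [← hudef]
    have e1 : (∑ i, ∑ j, X i * Y j * (pd2 r x i j - ∑ k, pd2 (Gh k) u i j * pd r x k))
        = (∑ i, ∑ j, (X i * Y j * pd2 r x i j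
            - X i * Y j * (∑ k, pd2 (Gh k) u i j * pd r x k))) :=
      Finset.sum_congr rfl fun i _ => Finset.sum_congr rfl fun j _ => by ring
    rw [e1, ← dsub, contract3 X Y (fun k => pd r x k) (fun k i j => pd2 (Gh k) u i j)]
  have hAuu : (∑ i, ∑ j, u i * u j * pd2 r x i j) = ∑ k, pd r x k * (2 * Gh k u) := by
    have h := hTT
    rw [hHess u u] at h
    have e : ∑ k, pd r x k * (∑ j, (∑ i, u i * pd2 (Gh k) u i j) * u j)
        = ∑ k, pd r x k * (2 * Gh k u) :=
      Finset.sum_congr rfl fun k _ => by rw [QUU k]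
    rw [e] at h
    linarith
  have hAuv : (∑ i, ∑ j, u i * Jstd n u j * pd2 r x i j)
      = ∑ k, pd r x k * (2 * ∑ k', Jmat n k k' * Gh k' u) := by
    have h := hTV
    rw [hHess u (Jstd n u)] at h
    have e : ∑ k, pd r x k * (∑ j, (∑ i, u i * pd2 (Gh k) u i j) * Jstd n u j)
        = ∑ k, pd r x k * (2 * ∑ k', Jmat n k k' * Gh k' u) :=
      Finset.sum_congr rfl fun k _ => by rw [QUV k]
    rw [e] at h
    linarith
  have hAvu : (∑ i, ∑ j, Jstd n u i * u j * pd2 r x i j)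
      = (∑ i, ∑ j, u i * Jstd n u j * pd2 r x i j) := by
    rw [Finset.sum_comm]
    exact Finset.sum_congr rfl fun j _ => Finset.sum_congr rfl fun i _ => by
      rw [pd2_symm hrsm x i j]; ring
  have hHvv : finslerHess n Gh r T x (Jstd n u) (Jstd n u)
      = (∑ i, ∑ j, Jstd n u i * Jstd n u j * pd2 r x i j)
        + ∑ k, pd r x k * (2 * Gh k u) := by
    rw [hHess (Jstd n u) (Jstd n u)]
    have e : ∑ k, pd r x k * (∑ j, (∑ i, Jstd n u i * pd2 (Gh k) u i j) * Jstd n u j)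
        = ∑ k, pd r x k * (-(2 * Gh k u)) :=
      Finset.sum_congr rfl fun k _ => by rw [QVV k]
    have e2 : ∑ k, pd r x k * (-(2 * Gh k u)) = -∑ k, pd r x k * (2 * Gh k u) := by
      rw [← Finset.sum_neg_distrib]
      exact Finset.sum_congr rfl fun k _ => by ring
    rw [e, e2]
    ring
  -- block identities
  have hB1 : (4:ℝ) * (∑ α : Fin n, ∑ β : Fin n,
        ((u (lo n α) * u (lo n β) - u (hi n α) * u (hi n β))
            * (pd2 r x (lo n α) (lo n β) - pd2 r x (hi n α) (hi n β))
          + (u (lo n α) * u (hi n β) + u (hi n α) * u (lo n β))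
            * (pd2 r x (hi n α) (lo n β) + pd2 r x (lo n α) (hi n β))) / 4)
      = (∑ i, ∑ j, u i * u j * pd2 r x i j)
        - (∑ i, ∑ j, Jstd n u i * Jstd n u j * pd2 r x i j) := by
    rw [dscale, split2 (fun i j => u i * u j * pd2 r x i j),
      split2 (fun i j => Jstd n u i * Jstd n u j * pd2 r x i j)]
    simp only [Jstd_lo, Jstd_hi]
    rw [add4, add4, dsub]
    exact Finset.sum_congr rfl fun α _ => Finset.sum_congr rfl fun β _ => by ring
  have hB2 : (4:ℝ) * (∑ α : Fin n, ∑ β : Fin n,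
        ((u (lo n α) * u (hi n β) + u (hi n α) * u (lo n β))
            * (pd2 r x (lo n α) (lo n β) - pd2 r x (hi n α) (hi n β))
          - (u (lo n α) * u (lo n β) - u (hi n α) * u (hi n β))
            * (pd2 r x (hi n α) (lo n β) + pd2 r x (lo n α) (hi n β))) / 4)
      = -((∑ i, ∑ j, u i * Jstd n u j * pd2 r x i j)
          + (∑ i, ∑ j, Jstd n u i * u j * pd2 r x i j)) := by
    rw [dscale, split2 (fun i j => u i * Jstd n u j * pd2 r x i j),
      split2 (fun i j => Jstd n u i * u j * pd2 r x i j)]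
    simp only [Jstd_lo, Jstd_hi]
    rw [add4, add4, dadd, dneg]
    exact Finset.sum_congr rfl fun α _ => Finset.sum_congr rfl fun β _ => by ring
  have hGB : (∑ k, pd r x k * (2 * Gh k u))
      = 2 * ∑ α : Fin n, (Gh (lo n α) u * pd r x (lo n α) + Gh (hi n α) u * pd r x (hi n α)) := by
    rw [sum_split (fun k => pd r x k * (2 * Gh k u)), Finset.mul_sum, ← Finset.sum_add_distrib]
    exact Finset.sum_congr rfl fun α _ => by ring
  have hJB : (∑ k, pd r x k * (2 * ∑ k', Jmat n k k' * Gh k' u))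
      = -2 * ∑ α : Fin n, (Gh (hi n α) u * pd r x (lo n α) - Gh (lo n α) u * pd r x (hi n α)) := by
    have e0 : (∑ k, pd r x k * (2 * ∑ k', Jmat n k k' * Gh k' u))
        = ∑ k, pd r x k * (2 * Jstd n (fun i => Gh i u) k) :=
      Finset.sum_congr rfl fun k _ => by rw [gvec k]
    rw [e0, sum_split (fun k => pd r x k * (2 * Jstd n (fun i => Gh i u) k))]
    simp only [Jstd_lo, Jstd_hi]
    rw [Finset.mul_sum, ← Finset.sum_add_distrib]
    exact Finset.sum_congr rfl fun α _ => by ring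
  -- the complex Hessian in real terms
  have hC : complexHess11 n Gh r T x
      = (((∑ α : Fin n, ∑ β : Fin n,
            ((u (lo n α) * u (lo n β) - u (hi n α) * u (hi n β))
                * (pd2 r x (lo n α) (lo n β) - pd2 r x (hi n α) (hi n β))
              + (u (lo n α) * u (hi n β) + u (hi n α) * u (lo n β))
                * (pd2 r x (hi n α) (lo n β) + pd2 r x (lo n α) (hi n β))) / 4)
          - ∑ α : Fin n, (Gh (lo n α) u * pd r x (lo n α) + Gh (hi n α) u * pd r x (hi n α))
            : ℝ) : ℂ)
        + (((∑ α : Fin n, ∑ β : Fin n,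
            ((u (lo n α) * u (hi n β) + u (hi n α) * u (lo n β))
                * (pd2 r x (lo n α) (lo n β) - pd2 r x (hi n α) (hi n β))
              - (u (lo n α) * u (lo n β) - u (hi n α) * u (hi n β))
                * (pd2 r x (hi n α) (lo n β) + pd2 r x (lo n α) (hi n β))) / 4)
          - ∑ α : Fin n, (Gh (hi n α) u * pd r x (lo n α) - Gh (lo n α) u * pd r x (hi n α))
            : ℝ) : ℂ) * Complex.I := by
    unfold complexHess11
    rw [← hudef]
    have hterm1 : ∀ α β : Fin n,
        ((u (lo n α) : ℂ) + (u (hi n α) : ℂ) * Complex.I) *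
          ((u (lo n β) : ℂ) + (u (hi n β) : ℂ) * Complex.I) *
          ((1 / 4 : ℂ) *
            (((pd2 r x (lo n α) (lo n β) : ℝ) - pd2 r x (hi n α) (hi n β) : ℝ) -
              Complex.I *
                ((pd2 r x (hi n α) (lo n β) : ℝ) + pd2 r x (lo n α) (hi n β) : ℝ)))
        = ((((u (lo n α) * u (lo n β) - u (hi n α) * u (hi n β))
              * (pd2 r x (lo n α) (lo n β) - pd2 r x (hi n α) (hi n β))
            + (u (lo n α) * u (hi n β) + u (hi n α) * u (lo n β))
              * (pd2 r x (hi n α) (lo n β) + pd2 r x (lo n α) (hi n β))) / 4 : ℝ) : ℂ)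
          + ((((u (lo n α) * u (hi n β) + u (hi n α) * u (lo n β))
              * (pd2 r x (lo n α) (lo n β) - pd2 r x (hi n α) (hi n β))
            - (u (lo n α) * u (lo n β) - u (hi n α) * u (hi n β))
              * (pd2 r x (hi n α) (lo n β) + pd2 r x (lo n α) (hi n β))) / 4 : ℝ) : ℂ)
            * Complex.I := by
      intro α β
      apply Complex.ext <;>
        simp [Complex.mul_re, Complex.mul_im, Complex.add_re, Complex.add_im, Complex.sub_re,
          Complex.sub_im, Complex.div_re, Complex.div_im, Complex.normSq_apply] <;> ring
    have hterm2 : ∀ α : Fin n,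
        (2 : ℂ) * (((Gh (lo n α) u : ℂ) + (Gh (hi n α) u : ℂ) * Complex.I) *
          ((1 / 2 : ℂ) * ((pd r x (lo n α) : ℂ) - Complex.I * (pd r x (hi n α) : ℂ))))
        = ((Gh (lo n α) u * pd r x (lo n α) + Gh (hi n α) u * pd r x (hi n α) : ℝ) : ℂ)
          + ((Gh (hi n α) u * pd r x (lo n α) - Gh (lo n α) u * pd r x (hi n α) : ℝ) : ℂ)
            * Complex.I := by
      intro α
      apply Complex.ext <;>
        simp [Complex.mul_re, Complex.mul_im, Complex.add_re, Complex.add_im, Complex.sub_re,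
          Complex.sub_im, Complex.div_re, Complex.div_im, Complex.normSq_apply] <;> ring
    have s1 : ∀ α : Fin n,
        (∑ β : Fin n, ((u (lo n α) : ℂ) + (u (hi n α) : ℂ) * Complex.I) *
          ((u (lo n β) : ℂ) + (u (hi n β) : ℂ) * Complex.I) *
          ((1 / 4 : ℂ) *
            (((pd2 r x (lo n α) (lo n β) : ℝ) - pd2 r x (hi n α) (hi n β) : ℝ) -
              Complex.I *
                ((pd2 r x (hi n α) (lo n β) : ℝ) + pd2 r x (lo n α) (hi n β) : ℝ))))
        = ((∑ β : Fin n, ((u (lo n α) * u (lo n β) - u (hi n α) * u (hi n β))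
              * (pd2 r x (lo n α) (lo n β) - pd2 r x (hi n α) (hi n β))
            + (u (lo n α) * u (hi n β) + u (hi n α) * u (lo n β))
              * (pd2 r x (hi n α) (lo n β) + pd2 r x (lo n α) (hi n β))) / 4 : ℝ) : ℂ)
          + ((∑ β : Fin n, ((u (lo n α) * u (hi n β) + u (hi n α) * u (lo n β))
              * (pd2 r x (lo n α) (lo n β) - pd2 r x (hi n α) (hi n β))
            - (u (lo n α) * u (lo n β) - u (hi n α) * u (hi n β))
              * (pd2 r x (hi n α) (lo n β) + pd2 r x (lo n α) (hi n β))) / 4 : ℝ) : ℂ)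
            * Complex.I := by
      intro α
      rw [Finset.sum_congr rfl fun β _ => hterm1 α β]
      exact csum_split _ _
    have e1 := Finset.sum_congr rfl fun α (_ : α ∈ (Finset.univ : Finset (Fin n))) => s1 α
    rw [e1, csum_split]
    have e2 : (2 : ℂ) * ∑ α : Fin n,
        (((Gh (lo n α) u : ℂ) + (Gh (hi n α) u : ℂ) * Complex.I) *
          ((1 / 2 : ℂ) * ((pd r x (lo n α) : ℂ) - Complex.I * (pd r x (hi n α) : ℂ))))
        = (((∑ α : Fin n, (Gh (lo n α) u * pd r x (lo n α)
              + Gh (hi n α) u * pd r x (hi n α))) : ℝ) : ℂ)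
          + (((∑ α : Fin n, (Gh (hi n α) u * pd r x (lo n α)
              - Gh (lo n α) u * pd r x (hi n α))) : ℝ) : ℂ) * Complex.I := by
      rw [Finset.mul_sum, Finset.sum_congr rfl fun α (_ : α ∈ (Finset.univ : Finset (Fin n))) =>
        hterm2 α]
      exact csum_split _ _
    rw [e2]
    push_cast
    ring

  rw [hC]
  have R1 : finslerHess n Gh r T x (Jstd n u) (Jstd n u)
      = -4 * ((∑ α : Fin n, ∑ β : Fin n,
            ((u (lo n α) * u (lo n β) - u (hi n α) * u (hi n β))
                * (pd2 r x (lo n α) (lo n β) - pd2 r x (hi n α) (hi n β))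
              + (u (lo n α) * u (hi n β) + u (hi n α) * u (lo n β))
                * (pd2 r x (hi n α) (lo n β) + pd2 r x (lo n α) (hi n β))) / 4)
          - ∑ α : Fin n, (Gh (lo n α) u * pd r x (lo n α) + Gh (hi n α) u * pd r x (hi n α))) := by
    linarith [hB1, hGB, hAuu, hHvv]
  have R2 : (∑ α : Fin n, ∑ β : Fin n,
            ((u (lo n α) * u (hi n β) + u (hi n α) * u (lo n β))
                * (pd2 r x (lo n α) (lo n β) - pd2 r x (hi n α) (hi n β))
              - (u (lo n α) * u (lo n β) - u (hi n α) * u (hi n β))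
                * (pd2 r x (hi n α) (lo n β) + pd2 r x (lo n α) (hi n β))) / 4)
          - ∑ α : Fin n, (Gh (hi n α) u * pd r x (lo n α) - Gh (lo n α) u * pd r x (hi n α))
      = 0 := by
    linarith [hB2, hJB, hAuv, hAvu]
  rw [R1, R2]
  push_cast
  ring
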